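/- arXiv:1708.02818 — 4 statements merged into one kernel-verified Lean document; each statement's English description precedes it below -/
import Mathlib

section
/- Let X, Y be positive definite Hermitian matrices, β := M(Y,X) and α := m(Y,X) = 1/M(X,Y), with α ≤ β. Then for every τ ∈ ℝ, the matrix χ(τ) := ((β^τ − α^τ)/(β − α))·Y + ((β α^τ − α β^τ)/(β − α))·X (interpreted as α^τ X when β = α) is positive definite. -/
/-!
In the Loewner order, `α = sup {m | m • X ≤ Y}` and `β = inf {l | Y ≤ l • X}` are attained:
the two sets are closed, and they are bounded because `X` is squeezed between two positive
multiples of the identity. Moreover `α > 0` since `Y` dominates a positive multiple of `X`.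
The coefficients of `χ(τ) = c • Y + d • X` are those of the affine function `f = c • id + d` with
`f α = α ^ τ` and `f β = β ^ τ`, so
`χ(τ) = c • (Y - α • X) + α ^ τ • X = (-c) • (β • X - Y) + β ^ τ • X`,
and whichever of `c`, `-c` is nonnegative writes `χ(τ)` as a positive semidefinite plus a
positive definite matrix. The argument works verbatim in any unital C⋆-algebra, with
positive definiteness read as strict positivity.
-/

open Matrix
open scoped ComplexOrder

namespace IsStrictlyPositive

variable {A : Type*} [CStarAlgebra A] [PartialOrder A] [StarOrderedRing A] {a b : A}

theorem smul_add_smul_of_le_of_le (ha : IsStrictlyPositive a) {α β c d : ℝ}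
    (hαb : α • a ≤ b) (hbβ : b ≤ β • a) (hα : 0 < c * α + d) (hβ : 0 < c * β + d) :
    IsStrictlyPositive (c • b + d • a) := by
  rcases le_total 0 c with hc | hc
  · have h : c • b + d • a = c • (b - α • a) + (c * α + d) • a := by module
    rw [h]
    exact (ha.smul hα).nonneg_add (smul_nonneg hc (sub_nonneg.2 hαb))
  · have h : c • b + d • a = (-c) • (β • a - b) + (c * β + d) • a := by module
    rw [h]
    exact (ha.smul hβ).nonneg_add (smul_nonneg (neg_nonneg.2 hc) (sub_nonneg.2 hbβ))

variable [Nontrivial A]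

theorem exists_pos_algebraMap_le (ha : IsStrictlyPositive a) :
    ∃ r : ℝ, 0 < r ∧ algebraMap ℝ A r ≤ a :=
  (CFC.exists_pos_algebraMap_le_iff ha.isSelfAdjoint).2 fun _ hx ↦ ha.spectrum_pos hx

theorem exists_pos_le_smul (ha : IsStrictlyPositive a) (hb : IsSelfAdjoint b) :
    ∃ l : ℝ, 0 < l ∧ b ≤ l • a := by
  obtain ⟨r, hr, hra⟩ := ha.exists_pos_algebraMap_le
  refine ⟨(‖b‖ + 1) / r, by positivity, ?_⟩
  calc b ≤ algebraMap ℝ A ‖b‖ := hb.le_algebraMap_norm_self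
    _ ≤ algebraMap ℝ A (‖b‖ + 1) := algebraMap_mono A (by linarith)
    _ = ((‖b‖ + 1) / r) • algebraMap ℝ A r := by
      rw [Algebra.smul_def, ← map_mul, div_mul_cancel₀ _ hr.ne']
    _ ≤ ((‖b‖ + 1) / r) • a := smul_le_smul_of_nonneg_left hra (by positivity)

theorem le_of_smul_le_smul (ha : IsStrictlyPositive a) {m l : ℝ} (h : m • a ≤ l • a) :
    m ≤ l := by
  by_contra! hlm
  have hpos : IsStrictlyPositive ((m - l) • a) := ha.smul (sub_pos.2 hlm)
  have hnonpos : (m - l) • a ≤ 0 := by rwa [sub_smul, sub_nonpos]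
  exact hpos.isUnit.ne_zero (le_antisymm hnonpos hpos.nonneg)

theorem bddAbove_setOf_smul_le (ha : IsStrictlyPositive a) (hb : IsSelfAdjoint b) :
    BddAbove {m : ℝ | m • a ≤ b} := by
  obtain ⟨l, -, hl⟩ := ha.exists_pos_le_smul hb
  exact ⟨l, fun m hm ↦ ha.le_of_smul_le_smul (hm.trans hl)⟩

theorem sSup_smul_le (ha : IsStrictlyPositive a) (hb : IsSelfAdjoint b) :
    sSup {m : ℝ | m • a ≤ b} • a ≤ b := by
  obtain ⟨l, -, hl⟩ := ha.exists_pos_le_smul hb.neg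
  have hclosed : IsClosed {m : ℝ | m • a ≤ b} :=
    isClosed_le (continuous_id.smul continuous_const) continuous_const
  exact hclosed.csSup_mem ⟨-l, by rwa [Set.mem_ofPred, neg_smul, neg_le]⟩
    (ha.bddAbove_setOf_smul_le hb)

theorem le_sInf_smul (ha : IsStrictlyPositive a) (hb : IsSelfAdjoint b) :
    b ≤ sInf {l : ℝ | b ≤ l • a} • a := by
  have hneg : -{l : ℝ | b ≤ l • a} = {m : ℝ | m • a ≤ -b} := by
    ext m
    simp only [Set.mem_neg, Set.mem_ofPred, neg_smul, le_neg]
  rw [Real.sInf_def, hneg, neg_smul, le_neg]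
  exact ha.sSup_smul_le hb.neg

theorem pos_sSup_setOf_smul_le (ha : IsStrictlyPositive a) (hb : IsStrictlyPositive b) :
    0 < sSup {m : ℝ | m • a ≤ b} := by
  obtain ⟨k, hk, hak⟩ := hb.exists_pos_le_smul ha.isSelfAdjoint
  have hmem : k⁻¹ • a ≤ b :=
    calc k⁻¹ • a ≤ k⁻¹ • k • b := smul_le_smul_of_nonneg_left hak (by positivity)
      _ = b := inv_smul_smul₀ hk.ne' b
  exact (inv_pos.2 hk).trans_le (le_csSup (ha.bddAbove_setOf_smul_le hb.isSelfAdjoint) hmem)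

end IsStrictlyPositive

theorem projective_path_posdef_general
    {n : ℕ} [NeZero n] (X Y : Matrix (Fin n) (Fin n) ℂ)
    (hX : X.PosDef) (hY : Y.PosDef)
    (α β : ℝ)
    (hβ : β = sInf {l : ℝ | (l • X - Y).PosSemidef})
    (hα : α = sSup {m : ℝ | (Y - m • X).PosSemidef}) :
    ∀ τ : ℝ,
      (if β = α then ((α ^ τ) • X)
       else (((β ^ τ - α ^ τ) / (β - α)) • Y +
             ((β * α ^ τ - α * β ^ τ) / (β - α)) • X)).PosDef := by
  open scoped MatrixOrder Matrix.Norms.L2Operator in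
  have hX' := hX.isStrictlyPositive
  have hY' := hY.isStrictlyPositive
  have hαY : α • X ≤ Y := hα ▸ hX'.sSup_smul_le hY'.isSelfAdjoint
  have hYβ : Y ≤ β • X := hβ ▸ hX'.le_sInf_smul hY'.isSelfAdjoint
  have hα0 : 0 < α := hα ▸ hX'.pos_sSup_setOf_smul_le hY'
  have hβ0 : 0 < β := hα0.trans_le (hX'.le_of_smul_le_smul (hαY.trans hYβ))
  intro τ
  rw [← isStrictlyPositive_iff_posDef]
  split_ifs with hβα
  · exact hX'.smul (by positivity)
  · have hne : β - α ≠ 0 := sub_ne_zero.2 hβα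
    have hcα : (β ^ τ - α ^ τ) / (β - α) * α + (β * α ^ τ - α * β ^ τ) / (β - α) = α ^ τ := by
      field_simp; ring
    have hcβ : (β ^ τ - α ^ τ) / (β - α) * β + (β * α ^ τ - α * β ^ τ) / (β - α) = β ^ τ := by
      field_simp; ring
    exact hX'.smul_add_smul_of_le_of_le hαY hYβ (by rw [hcα]; positivity)
      (by rw [hcβ]; positivity)

/-- With `β := M(Y,X)` and `α := m(Y,X)`, `α ≤ β`, the projective
straight-line path `χ(τ)` (interpreted as `α^τ X` when `β = α`) is positive definite
for every `τ ∈ ℝ`. -/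
theorem projective_path_posdef
    {n : ℕ} [NeZero n] (X Y : Matrix (Fin n) (Fin n) ℂ)
    (hX : X.PosDef) (hY : Y.PosDef)
    (α β : ℝ)
    (hβ : β = sInf {l : ℝ | (l • X - Y).PosSemidef})
    (hα : α = sSup {m : ℝ | (Y - m • X).PosSemidef})
    (hαβ : α ≤ β) :
    ∀ τ : ℝ,
      (if β = α then ((α ^ τ) • X)
       else (((β ^ τ - α ^ τ) / (β - α)) • Y +
             ((β * α ^ τ - α * β ^ τ) / (β - α)) • X)).PosDef :=
  projective_path_posdef_general X Y hX hY α β hβ hα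
end

section
/- Let X, Y be positive definite Hermitian matrices with α := m(Y,X), β := M(Y,X), α ≤ β, and let χ(τ) be the projective straight-line path. Then for all τ ∈ [0,1], χ(τ) satisfies α^τ X ≼ χ(τ), i.e., χ(τ) − α^τ X is positive semidefinite. -/
/-!
The supremum `α = m(Y,X)` is attained: the set of `μ` with `μ X ≼ Y` is closed, because the
positive semidefinite cone is, and contains `0` because `Y ≽ 0`. (If the set is unbounded, `sSup`
returns the junk value `0`, which lies in it as well.) Hence `Y - α X ≽ 0` and `α ≥ 0`. For `α < β`
the coefficients of `χ(τ)` are chosen so that `χ(τ) - α^τ X = ((β^τ - α^τ) / (β - α)) (Y - α X)`,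
a nonnegative multiple since `t ↦ t^τ` is monotone on `[0, ∞)`.
-/

open Matrix
open scoped ComplexOrder

namespace Matrix

variable {n R : Type*} [Fintype n] [CommRing R] [PartialOrder R] [StarRing R]
  [TopologicalSpace R] [IsTopologicalRing R] [ContinuousStar R] [OrderClosedTopology R]

theorem isClosed_setOf_posSemidef : IsClosed {A : Matrix n n R | A.PosSemidef} := by
  simp only [posSemidef_iff_dotProduct_mulVec, Set.ofPred_and, Set.ofPred_forall]
  refine .inter (isClosed_eq continuous_id.matrix_conjTranspose continuous_id)
    (isClosed_iInter fun x => isClosed_le continuous_const ?_)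
  exact continuous_const.dotProduct (continuous_id.matrix_mulVec continuous_const)

end Matrix

section LowerBounds

variable {n 𝕜 : Type*} [Fintype n] [RCLike 𝕜] (X Y : Matrix n n 𝕜)

theorem isClosed_setOf_posSemidef_sub_smul :
    IsClosed {m : ℝ | (Y - m • X).PosSemidef} :=
  isClosed_setOf_posSemidef.preimage (continuous_const.sub (continuous_id.smul continuous_const))

variable {X Y}

theorem sSup_nonneg_and_posSemidef_sub_sSup_smul (hY : Y.PosSemidef) :
    0 ≤ sSup {m : ℝ | (Y - m • X).PosSemidef} ∧
      (Y - sSup {m : ℝ | (Y - m • X).PosSemidef} • X).PosSemidef := by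
  set S := {m : ℝ | (Y - m • X).PosSemidef}
  have hS0 : (0 : ℝ) ∈ S := by simpa [S] using hY
  by_cases hbdd : BddAbove S
  · exact ⟨le_csSup hbdd hS0, (isClosed_setOf_posSemidef_sub_smul X Y).csSup_mem ⟨0, hS0⟩ hbdd⟩
  · rw [Real.sSup_of_not_bddAbove hbdd]
    exact ⟨le_rfl, hS0⟩

end LowerBounds

theorem smul_add_smul_sub_smul_eq_smul_sub {M : Type*} [AddCommGroup M] [Module ℝ M]
    {a b : ℝ} (hab : a ≠ b) (p q : ℝ) (X Y : M) :
    ((q - p) / (b - a)) • Y + ((b * p - a * q) / (b - a)) • X - p • X =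
      ((q - p) / (b - a)) • (Y - a • X) := by
  have hba : b - a ≠ 0 := sub_ne_zero.mpr hab.symm
  have hcoeff : (b * p - a * q) / (b - a) - p = -((q - p) / (b - a) * a) := by
    field_simp
    ring
  rw [smul_sub, smul_smul, add_sub_assoc, ← sub_smul, hcoeff, neg_smul, ← sub_eq_add_neg]

theorem projective_path_lower_bound_general
    {n : ℕ} (X Y : Matrix (Fin n) (Fin n) ℂ)
    (hY : Y.PosDef)
    (α β : ℝ)
    (hα : α = sSup {m : ℝ | (Y - m • X).PosSemidef})
    (hαβ : α ≤ β) :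
    ∀ χ : ℝ → Matrix (Fin n) (Fin n) ℂ,
      (χ = fun τ => if β = α then ((α ^ τ) • X)
            else (((β ^ τ - α ^ τ) / (β - α)) • Y +
                  ((β * α ^ τ - α * β ^ τ) / (β - α)) • X)) →
      ∀ τ ∈ Set.Icc (0:ℝ) 1, (χ τ - (α ^ τ) • X).PosSemidef := by
  rintro χ rfl τ ⟨hτ, -⟩
  obtain ⟨hα0, hYαX⟩ := hα ▸ sSup_nonneg_and_posSemidef_sub_sSup_smul (X := X) hY.posSemidef
  by_cases hβα : β = α
  · simpa [hβα] using PosSemidef.zero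
  · simp only [if_neg hβα]
    rw [smul_add_smul_sub_smul_eq_smul_sub (Ne.symm hβα)]
    have hpow : α ^ τ ≤ β ^ τ := Real.rpow_le_rpow hα0 hαβ hτ
    exact hYαX.smul (div_nonneg (sub_nonneg.mpr hpow) (sub_nonneg.mpr hαβ))

/-- With `α := m(Y,X)`, `β := M(Y,X)`, `α ≤ β`, the projective
straight-line path satisfies `α^τ X ≼ χ(τ)` for all `τ ∈ [0,1]`. -/
theorem projective_path_lower_bound
    {n : ℕ} [NeZero n] (X Y : Matrix (Fin n) (Fin n) ℂ)
    (hX : X.PosDef) (hY : Y.PosDef)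
    (α β : ℝ)
    (hβ : β = sInf {l : ℝ | (l • X - Y).PosSemidef})
    (hα : α = sSup {m : ℝ | (Y - m • X).PosSemidef})
    (hαβ : α ≤ β) :
    ∀ χ : ℝ → Matrix (Fin n) (Fin n) ℂ,
      (χ = fun τ => if β = α then ((α ^ τ) • X)
            else (((β ^ τ - α ^ τ) / (β - α)) • Y +
                  ((β * α ^ τ - α * β ^ τ) / (β - α)) • X)) →
      ∀ τ ∈ Set.Icc (0:ℝ) 1, (χ τ - (α ^ τ) • X).PosSemidef :=
  projective_path_lower_bound_general X Y hY α β hα hαβ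
end

section
/- Let Φ₁, Φ₂ : [−π,π] → ℂ^{n×n} be continuous Hermitian positive-definite valued functions and T : [−π,π] → ℂ^{n×n} a continuous function with T(θ) invertible for every θ. Then M(T Φ₁ T*, T Φ₂ T*) = M(Φ₁, Φ₂), where M(Φ,Ψ) := inf{λ : Φ(θ) ≼ λ Ψ(θ) for all θ}. Consequently the Thompson distance d_T(Φ₁,Φ₂) := log max{M(Φ₁,Φ₂), M(Φ₂,Φ₁)} is filtering invariant: d_T(TΦ₁T*, TΦ₂T*) = d_T(Φ₁,Φ₂). -/
open Matrix
open scoped ComplexOrder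

/-- `M(Φ,Ψ) := inf {λ : Φ(θ) ≼ λ Ψ(θ) for all θ ∈ [-π,π]}` (frequency-wise
Loewner order). -/
noncomputable def Mfun {n : ℕ} (Φ Ψ : ℝ → Matrix (Fin n) (Fin n) ℂ) : ℝ :=
  sInf {l : ℝ | ∀ θ ∈ Set.Icc (-Real.pi) Real.pi, (l • Ψ θ - Φ θ).PosSemidef}

/-- Thompson distance between frequency-wise positive definite matrix functions. -/
noncomputable def dTfun {n : ℕ} (Φ Ψ : ℝ → Matrix (Fin n) (Fin n) ℂ) : ℝ :=
  Real.log (max (Mfun Φ Ψ) (Mfun Ψ Φ))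

theorem Mfun_conj {n : ℕ} (Φ Ψ T : ℝ → Matrix (Fin n) (Fin n) ℂ)
    (hT : ∀ θ ∈ Set.Icc (-Real.pi) Real.pi, IsUnit (T θ).det) :
    Mfun (fun θ => T θ * Φ θ * (T θ)ᴴ) (fun θ => T θ * Ψ θ * (T θ)ᴴ) = Mfun Φ Ψ := by
  unfold Mfun
  congr 1
  ext l
  refine forall₂_congr fun θ hθ => ?_
  have hconj : l • (T θ * Ψ θ * (T θ)ᴴ) - T θ * Φ θ * (T θ)ᴴ
      = T θ * (l • Ψ θ - Φ θ) * star (T θ) := by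
    rw [Matrix.mul_sub, Matrix.sub_mul, Matrix.mul_smul, Matrix.smul_mul, star_eq_conjTranspose]
  rw [hconj, ((isUnit_iff_isUnit_det _).mpr (hT θ hθ)).posSemidef_star_right_conjugate_iff]

theorem dTfun_conj {n : ℕ} (Φ Ψ T : ℝ → Matrix (Fin n) (Fin n) ℂ)
    (hT : ∀ θ ∈ Set.Icc (-Real.pi) Real.pi, IsUnit (T θ).det) :
    dTfun (fun θ => T θ * Φ θ * (T θ)ᴴ) (fun θ => T θ * Ψ θ * (T θ)ᴴ) = dTfun Φ Ψ := by
  rw [dTfun, dTfun, Mfun_conj Φ Ψ T hT, Mfun_conj Ψ Φ T hT]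

theorem thompson_spectral_filtering_invariance_general
    {n : ℕ} (Φ₁ Φ₂ T : ℝ → Matrix (Fin n) (Fin n) ℂ)
    (hT : ∀ θ ∈ Set.Icc (-Real.pi) Real.pi, IsUnit (T θ).det) :
    Mfun (fun θ => T θ * Φ₁ θ * (T θ)ᴴ) (fun θ => T θ * Φ₂ θ * (T θ)ᴴ) = Mfun Φ₁ Φ₂ ∧
    dTfun (fun θ => T θ * Φ₁ θ * (T θ)ᴴ) (fun θ => T θ * Φ₂ θ * (T θ)ᴴ) = dTfun Φ₁ Φ₂ :=
  ⟨Mfun_conj Φ₁ Φ₂ T hT, dTfun_conj Φ₁ Φ₂ T hT⟩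

/-- Filtering invariance: for a frequency-wise invertible filter `T`,
`M(TΦ₁T*, TΦ₂T*) = M(Φ₁,Φ₂)`, hence the Thompson distance is filtering invariant. -/
theorem thompson_spectral_filtering_invariance
    {n : ℕ} [NeZero n] (Φ₁ Φ₂ T : ℝ → Matrix (Fin n) (Fin n) ℂ)
    (hc1 : ContinuousOn Φ₁ (Set.Icc (-Real.pi) Real.pi))
    (hc2 : ContinuousOn Φ₂ (Set.Icc (-Real.pi) Real.pi))
    (hcT : ContinuousOn T (Set.Icc (-Real.pi) Real.pi))
    (h1 : ∀ θ ∈ Set.Icc (-Real.pi) Real.pi, (Φ₁ θ).PosDef)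
    (h2 : ∀ θ ∈ Set.Icc (-Real.pi) Real.pi, (Φ₂ θ).PosDef)
    (hT : ∀ θ ∈ Set.Icc (-Real.pi) Real.pi, IsUnit (T θ).det) :
    Mfun (fun θ => T θ * Φ₁ θ * (T θ)ᴴ) (fun θ => T θ * Φ₂ θ * (T θ)ᴴ) = Mfun Φ₁ Φ₂ ∧
    dTfun (fun θ => T θ * Φ₁ θ * (T θ)ᴴ) (fun θ => T θ * Φ₂ θ * (T θ)ᴴ) = dTfun Φ₁ Φ₂ :=
  thompson_spectral_filtering_invariance_general Φ₁ Φ₂ T hT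
end

section
/- Let Φ₁, Φ₂ : [−π,π] → ℂ^{n×n} be continuous Hermitian positive-definite valued functions with α := m(Φ₂,Φ₁) := (M(Φ₁,Φ₂))^{-1}, β := M(Φ₂,Φ₁), β ≠ α. Then for every τ ∈ ℝ, the path χ_T(τ)(θ) := ((β^τ − α^τ)/(β − α)) Φ₂(θ) + ((β α^τ − α β^τ)/(β − α)) Φ₁(θ) is Hermitian positive definite for every θ ∈ [−π,π]. -/
/-!
With `α = M(Φ₁,Φ₂)⁻¹` and `β = M(Φ₂,Φ₁)` we have `α Φ₁ ≼ Φ₂ ≼ β Φ₁` at every frequency: the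
infimum defining `M` is attained, since every constraint `λ Ψ - Φ ≽ 0` is closed in `λ`, and the
constraint set is nonempty because the Rayleigh quotient `x*Φx / x*Ψx` is bounded on the compact
set `[-π,π] × sphere`. The coefficients `s, t` of `χ_T(τ) = s Φ₂ + t Φ₁` satisfy `s α + t = α^τ`
and `s β + t = β^τ`, so `χ_T(τ)` equals `s (Φ₂ - α Φ₁) + α^τ Φ₁` when `s ≥ 0` and
`(-s) (β Φ₁ - Φ₂) + β^τ Φ₁` when `s < 0`: a positive semidefinite plus a positive definite matrix.
-/

open Matrix
open scoped ComplexOrder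

namespace Matrix

variable {m 𝕜 : Type*} [RCLike 𝕜]

theorem PosDef.smul_add_smul_of_sandwich {A B : Matrix m m 𝕜} (hA : A.PosDef) {a b s t : ℝ}
    (ha : (B - a • A).PosSemidef) (hb : (b • A - B).PosSemidef)
    (hsa : 0 < s * a + t) (hsb : 0 < s * b + t) : (s • B + t • A).PosDef := by
  rcases le_or_gt 0 s with hs | hs
  · have : s • B + t • A = s • (B - a • A) + (s * a + t) • A := by module
    exact this ▸ PosDef.posSemidef_add (ha.smul hs) (hA.smul hsa)
  · have : s • B + t • A = (-s) • (b • A - B) + (s * b + t) • A := by module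
    exact this ▸ PosDef.posSemidef_add (hb.smul (neg_nonneg.2 hs.le)) (hA.smul hsb)

theorem PosSemidef.sub_inv_smul {A B : Matrix m m 𝕜} {l : ℝ} (hl : 0 < l)
    (h : (l • A - B).PosSemidef) : (A - l⁻¹ • B).PosSemidef := by
  simpa [smul_sub, smul_smul, hl.ne'] using h.smul (inv_nonneg.2 hl.le)

variable [Fintype m]

lemma IsHermitian.posSemidef_iff_re_dotProduct_nonneg {A : Matrix m m 𝕜} (hA : A.IsHermitian) :
    A.PosSemidef ↔ ∀ x, 0 ≤ RCLike.re (star x ⬝ᵥ (A *ᵥ x)) := by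
  simp only [posSemidef_iff_dotProduct_mulVec, hA, true_and, RCLike.nonneg_iff (K := 𝕜),
    hA.im_star_dotProduct_mulVec_self, and_true]

lemma re_dotProduct_smul_sub_mulVec (l : ℝ) (A B : Matrix m m 𝕜) (x : m → 𝕜) :
    RCLike.re (star x ⬝ᵥ ((l • A - B) *ᵥ x)) =
      l * RCLike.re (star x ⬝ᵥ (A *ᵥ x)) - RCLike.re (star x ⬝ᵥ (B *ᵥ x)) := by
  simp [sub_mulVec, smul_mulVec, dotProduct_sub, dotProduct_smul, RCLike.smul_re]

lemma re_dotProduct_mulVec_real_smul (A : Matrix m m 𝕜) (r : ℝ) (x : m → 𝕜) :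
    RCLike.re (star (r • x) ⬝ᵥ (A *ᵥ (r • x))) = r ^ 2 * RCLike.re (star x ⬝ᵥ (A *ᵥ x)) := by
  simp only [star_smul, star_trivial, mulVec_smul, dotProduct_smul, smul_dotProduct,
    RCLike.smul_re]
  ring

theorem pos_of_smul_sub_posSemidef [Nonempty m] {A B : Matrix m m 𝕜} (hA : A.PosSemidef)
    (hB : B.PosDef) {l : ℝ} (h : (l • A - B).PosSemidef) : 0 < l := by
  obtain ⟨x, hx⟩ := exists_ne (0 : m → 𝕜)
  have hlAB := h.re_dotProduct_nonneg x
  rw [re_dotProduct_smul_sub_mulVec] at hlAB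
  nlinarith [hA.re_dotProduct_nonneg x, hB.re_dotProduct_pos hx]

theorem posSemidef_sInf_smul_sub {A B : Matrix m m 𝕜} (hA : A.PosSemidef) {S : Set ℝ}
    (hS : S.Nonempty) (hSAB : ∀ l ∈ S, (l • A - B).PosSemidef) :
    (sInf S • A - B).PosSemidef := by
  obtain ⟨l₀, hl₀⟩ := hS
  have hherm : (sInf S • A - B).IsHermitian := by
    have : sInf S • A - B = (sInf S - l₀) • A + (l₀ • A - B) := by module
    exact this ▸ (hA.1.smul (.all _)).add (hSAB l₀ hl₀).1
  refine hherm.posSemidef_iff_re_dotProduct_nonneg.2 fun x => ?_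
  have hle (l : ℝ) (hl : l ∈ S) :
      RCLike.re (star x ⬝ᵥ (B *ᵥ x)) ≤ l * RCLike.re (star x ⬝ᵥ (A *ᵥ x)) := by
    have := (hSAB l hl).re_dotProduct_nonneg x
    rw [re_dotProduct_smul_sub_mulVec] at this
    linarith
  rw [re_dotProduct_smul_sub_mulVec, sub_nonneg]
  rcases (hA.re_dotProduct_nonneg x).eq_or_lt with ha | ha
  · simpa [← ha] using hle l₀ hl₀
  · rw [← div_le_iff₀ ha]
    exact le_csInf ⟨l₀, hl₀⟩ fun l hl => (div_le_iff₀ ha).2 (hle l hl)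

lemma continuous_re_dotProduct_mulVec :
    Continuous fun p : Matrix m m 𝕜 × (m → 𝕜) => RCLike.re (star p.2 ⬝ᵥ (p.1 *ᵥ p.2)) := by
  fun_prop

variable {X : Type*} [TopologicalSpace X]

lemma _root_.ContinuousOn.re_dotProduct_mulVec {s : Set X} {Φ : X → Matrix m m 𝕜}
    {v : X → m → 𝕜} (hΦ : ContinuousOn Φ s) (hv : ContinuousOn v s) :
    ContinuousOn (fun x => RCLike.re (star (v x) ⬝ᵥ (Φ x *ᵥ v x))) s :=
  continuous_re_dotProduct_mulVec.comp_continuousOn (f := fun x => (Φ x, v x)) (hΦ.prodMk hv)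

theorem exists_forall_re_dotProduct_le_mul {K : Set X} (hK : IsCompact K)
    {Φ Ψ : X → Matrix m m 𝕜} (hΦ : ContinuousOn Φ K) (hΨ : ContinuousOn Ψ K)
    (hΨpos : ∀ θ ∈ K, (Ψ θ).PosDef) :
    ∃ L : ℝ, ∀ θ ∈ K, ∀ x,
      RCLike.re (star x ⬝ᵥ (Φ θ *ᵥ x)) ≤ L * RCLike.re (star x ⬝ᵥ (Ψ θ *ᵥ x)) := by
  let q (A : Matrix m m 𝕜) (x : m → 𝕜) : ℝ := RCLike.re (star x ⬝ᵥ (A *ᵥ x))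
  let S := K ×ˢ Metric.sphere (0 : m → 𝕜) 1
  have hpos : ∀ p ∈ S, 0 < q (Ψ p.1) p.2 := fun p hp =>
    (hΨpos p.1 hp.1).re_dotProduct_pos (ne_zero_of_mem_unit_sphere ⟨p.2, hp.2⟩)
  have hcont {Φ : X → Matrix m m 𝕜} (hΦ : ContinuousOn Φ K) :
      ContinuousOn (fun p : X × (m → 𝕜) => q (Φ p.1) p.2) S :=
    (hΦ.comp continuousOn_fst fun _ hp => hp.1).re_dotProduct_mulVec continuousOn_snd
  obtain ⟨L, hL⟩ := (hK.prod (isCompact_sphere 0 1)).bddAbove_image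
    ((hcont hΦ).div (hcont hΨ) fun p hp => (hpos p hp).ne')
  refine ⟨L, fun θ hθ x => ?_⟩
  rcases eq_or_ne x 0 with rfl | hx
  · simp
  obtain ⟨u, hu, hxu⟩ : ∃ u, (θ, u) ∈ S ∧ x = ‖x‖ • u :=
    ⟨(‖x‖⁻¹ : ℝ) • x, ⟨hθ, by simp [norm_smul, hx]⟩, by simp [smul_smul, hx]⟩
  have hLu : q (Φ θ) u ≤ L * q (Ψ θ) u := (div_le_iff₀ (hpos _ hu)).1 (hL ⟨_, hu, rfl⟩)
  rw [hxu, re_dotProduct_mulVec_real_smul, re_dotProduct_mulVec_real_smul]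
  nlinarith [sq_nonneg ‖x‖]

theorem exists_forall_smul_sub_posSemidef {K : Set X} (hK : IsCompact K)
    {Φ Ψ : X → Matrix m m 𝕜} (hcΦ : ContinuousOn Φ K) (hcΨ : ContinuousOn Ψ K)
    (hΦ : ∀ θ ∈ K, (Φ θ).IsHermitian) (hΨ : ∀ θ ∈ K, (Ψ θ).PosDef) :
    ∃ l : ℝ, ∀ θ ∈ K, (l • Ψ θ - Φ θ).PosSemidef := by
  obtain ⟨L, hL⟩ := exists_forall_re_dotProduct_le_mul hK hcΦ hcΨ hΨ
  refine ⟨L, fun θ hθ => ?_⟩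
  refine (((hΨ θ hθ).1.smul (.all L)).sub (hΦ θ hθ)).posSemidef_iff_re_dotProduct_nonneg.2
    fun x => ?_
  rw [re_dotProduct_smul_sub_mulVec]
  linarith [hL θ hθ x]

end Matrix

theorem smul_Mfun_sub_posSemidef {n : ℕ} {Φ Ψ : ℝ → Matrix (Fin n) (Fin n) ℂ}
    (hcΦ : ContinuousOn Φ (Set.Icc (-Real.pi) Real.pi))
    (hcΨ : ContinuousOn Ψ (Set.Icc (-Real.pi) Real.pi))
    (hΦ : ∀ θ ∈ Set.Icc (-Real.pi) Real.pi, (Φ θ).IsHermitian)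
    (hΨ : ∀ θ ∈ Set.Icc (-Real.pi) Real.pi, (Ψ θ).PosDef) :
    ∀ θ ∈ Set.Icc (-Real.pi) Real.pi, (Mfun Φ Ψ • Ψ θ - Φ θ).PosSemidef := fun θ hθ =>
  posSemidef_sInf_smul_sub (hΨ θ hθ).posSemidef
    (exists_forall_smul_sub_posSemidef isCompact_Icc hcΦ hcΨ hΦ hΨ) fun _ hl => hl θ hθ

/-- With `α := m(Φ₂,Φ₁) = M(Φ₁,Φ₂)⁻¹` and `β := M(Φ₂,Φ₁)`, `β ≠ α`,
the Finslerian geodesic path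
`χ_T(τ) = ((β^τ − α^τ)/(β − α)) Φ₂ + ((βα^τ − αβ^τ)/(β − α)) Φ₁`
is Hermitian positive definite at every frequency `θ ∈ [-π,π]`, for every `τ ∈ ℝ`. -/
theorem finsler_geodesic_spectral_posdef
    {n : ℕ} [NeZero n] (Φ₁ Φ₂ : ℝ → Matrix (Fin n) (Fin n) ℂ)
    (hc1 : ContinuousOn Φ₁ (Set.Icc (-Real.pi) Real.pi))
    (hc2 : ContinuousOn Φ₂ (Set.Icc (-Real.pi) Real.pi))
    (h1 : ∀ θ ∈ Set.Icc (-Real.pi) Real.pi, (Φ₁ θ).PosDef)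
    (h2 : ∀ θ ∈ Set.Icc (-Real.pi) Real.pi, (Φ₂ θ).PosDef)
    (α β : ℝ) (hα : α = (Mfun Φ₁ Φ₂)⁻¹) (hβ : β = Mfun Φ₂ Φ₁) (hne : β ≠ α) :
    ∀ τ : ℝ, ∀ θ ∈ Set.Icc (-Real.pi) Real.pi,
      (((β ^ τ - α ^ τ) / (β - α)) • Φ₂ θ +
       ((β * α ^ τ - α * β ^ τ) / (β - α)) • Φ₁ θ).PosDef := by
  intro τ θ hθ
  have h0 : (0 : ℝ) ∈ Set.Icc (-Real.pi) Real.pi := ⟨by linarith [Real.pi_pos], Real.pi_pos.le⟩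
  have hM₁₂ := smul_Mfun_sub_posSemidef hc1 hc2 (fun θ hθ => (h1 θ hθ).isHermitian) h2
  have hM₂₁ := smul_Mfun_sub_posSemidef hc2 hc1 (fun θ hθ => (h2 θ hθ).isHermitian) h1
  rw [← hβ] at hM₂₁
  have hM₁₂pos := pos_of_smul_sub_posSemidef (h2 0 h0).posSemidef (h1 0 h0) (hM₁₂ 0 h0)
  have hαpos : 0 < α := hα ▸ inv_pos.2 hM₁₂pos
  have hβpos : 0 < β := pos_of_smul_sub_posSemidef (h1 0 h0).posSemidef (h2 0 h0) (hM₂₁ 0 h0)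
  have hβα : β - α ≠ 0 := sub_ne_zero.2 hne
  refine (h1 θ hθ).smul_add_smul_of_sandwich (a := α) (b := β)
    (hα ▸ (hM₁₂ θ hθ).sub_inv_smul hM₁₂pos) (hM₂₁ θ hθ) ?_ ?_
  · rw [show (β ^ τ - α ^ τ) / (β - α) * α + (β * α ^ τ - α * β ^ τ) / (β - α) = α ^ τ by
      field_simp; ring]
    positivity
  · rw [show (β ^ τ - α ^ τ) / (β - α) * β + (β * α ^ τ - α * β ^ τ) / (β - α) = β ^ τ by
      field_simp; ring]
    positivity
end
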